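/- arXiv:2602.20278 — 6 statements merged into one kernel-verified Lean document; each statement's English description precedes it below -/
import Mathlib

section
/- Let C : {0,1}^n → {0,1}^m be a code with coordinate functions C_1,...,C_m, and fix i ∈ [n] and S ⊆ [m]. Suppose there exists a randomized decoder Dec with perfect completeness for coordinate i (for every message x, Pr[Dec(i, C(x)) = x_i] = 1), and suppose the event R = 'both queries of Dec(i,·) lie in S' has positive probability. Then for every string s ∈ {0,1}^m and every bit b ∈ {0,1}, there exists z ∈ {0,1}^m agreeing with s outside S (z_t = s_t for all t ∉ S) such that Pr[Dec(i, z) = 1 − b | R] = 1. -/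
/-!
Let `z` copy `s` outside `S` and, on `S`, a codeword of a message whose `i`-th bit is `!b`.
Whenever both queries fall in `S` the decoder cannot tell `z` from that codeword, so by perfect
completeness it outputs `!b` on every seed of positive weight.
-/

section TwoQueryDecoder

variable {Ω ι α β : Type*}

def decoderOutput (q1 : Ω → ι) (q2 : Ω → α → ι) (out : Ω → α → α → β) (y : ι → α) (ω : Ω) : β :=
  out ω (y (q1 ω)) (y (q2 ω (y (q1 ω))))

def QueriesIn (S : Finset ι) (q1 : Ω → ι) (q2 : Ω → α → ι) (y : ι → α) (ω : Ω) : Prop :=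
  q1 ω ∈ S ∧ q2 ω (y (q1 ω)) ∈ S

theorem decoderOutput_eq_of_queriesIn {S : Finset ι} {q1 : Ω → ι} {q2 : Ω → α → ι}
    (out : Ω → α → α → β) {y z : ι → α} {ω : Ω} (hq : QueriesIn S q1 q2 z ω)
    (hzy : ∀ t ∈ S, z t = y t) :
    decoderOutput q1 q2 out z ω = decoderOutput q1 q2 out y ω := by
  have h1 : z (q1 ω) = y (q1 ω) := hzy _ hq.1
  have h2 : z (q2 ω (y (q1 ω))) = y (q2 ω (y (q1 ω))) := hzy _ (h1 ▸ hq.2)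
  simp only [decoderOutput, h1, h2]

end TwoQueryDecoder

theorem Finset.sum_filter_and_eq_sum_filter_of_ne {ι M : Type*} [AddCommMonoid M]
    {s : Finset ι} {p q : ι → Prop} [DecidablePred p] [DecidablePred q] {f : ι → M}
    (h : ∀ x ∈ s, p x → f x ≠ 0 → q x) :
    ∑ x ∈ s with p x ∧ q x, f x = ∑ x ∈ s with p x, f x := by
  rw [← Finset.filter_filter]
  exact Finset.sum_filter_of_ne fun x hx hfx ↦
    h x (Finset.mem_filter.1 hx).1 (Finset.mem_filter.1 hx).2 hfx

theorem stmt_7_general {n m : ℕ} (C : (Fin n → Bool) → Fin m → Bool) (i : Fin n)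
    (S : Finset (Fin m))
    {Ω : Type*} [Fintype Ω]
    (w : Ω → ℝ) (hw : ∀ ω, 0 ≤ w ω)
    (q1 : Ω → Fin m) (q2 : Ω → Bool → Fin m)
    (out : Ω → Bool → Bool → Option Bool)
    (hpc : ∀ (x : Fin n → Bool) (ω : Ω), 0 < w ω →
      out ω (C x (q1 ω)) (C x (q2 ω (C x (q1 ω)))) = some (x i))
    (hR : ∀ y : Fin m → Bool,
      0 < ∑ ω ∈ Finset.univ.filter
        (fun ω => q1 ω ∈ S ∧ q2 ω (y (q1 ω)) ∈ S), w ω) :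
    ∀ (s : Fin m → Bool) (b : Bool), ∃ z : Fin m → Bool,
      (∀ t : Fin m, t ∉ S → z t = s t) ∧
      (∑ ω ∈ Finset.univ.filter (fun ω =>
          (q1 ω ∈ S ∧ q2 ω (z (q1 ω)) ∈ S) ∧
          out ω (z (q1 ω)) (z (q2 ω (z (q1 ω)))) = some (!b)), w ω) /
        (∑ ω ∈ Finset.univ.filter
          (fun ω => q1 ω ∈ S ∧ q2 ω (z (q1 ω)) ∈ S), w ω) = 1 := by
  intro s b
  let x : Fin n → Bool := fun _ ↦ !b
  refine ⟨S.piecewise (C x) s, fun t ht ↦ S.piecewise_eq_of_notMem _ _ ht, ?_⟩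
  rw [Finset.sum_filter_and_eq_sum_filter_of_ne, div_self (hR _).ne']
  intro ω _ hq hω
  calc decoderOutput q1 q2 out (S.piecewise (C x) s) ω
      = decoderOutput q1 q2 out (C x) ω :=
        decoderOutput_eq_of_queriesIn out hq fun t ht ↦ S.piecewise_eq_of_mem _ _ ht
    _ = some (x i) := hpc x ω ((hw ω).lt_of_ne' hω)

/-- Let `Dec` be a (possibly adaptive) randomized 2-query decoder
for coordinate `i` of the code `C`, modelled by a finite probability space
`(Ω, w)`, a first query `q1 ω`, a second query `q2 ω b` depending on the first
answer `b`, and an output `out ω b b' ∈ {0,1,⊥}` (`none` plays `⊥`).  Its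
output on a received word `y` is `out ω (y (q1 ω)) (y (q2 ω (y (q1 ω))))`.
Assume perfect completeness for coordinate `i` and that the event
`R(y) = "both queries lie in S"` has positive probability (for every word).
Then for every `s ∈ {0,1}^m` and bit `b` there is `z` agreeing with `s`
outside `S` such that, conditioned on `R(z)`, the decoder outputs `1 - b`
with probability 1. -/
theorem stmt_7 {n m : ℕ} (C : (Fin n → Bool) → Fin m → Bool) (i : Fin n)
    (S : Finset (Fin m))
    {Ω : Type*} [Fintype Ω] [DecidableEq Ω]
    (w : Ω → ℝ) (hw : ∀ ω, 0 ≤ w ω) (hw1 : ∑ ω, w ω = 1)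
    (q1 : Ω → Fin m) (q2 : Ω → Bool → Fin m)
    (out : Ω → Bool → Bool → Option Bool)
    (hpc : ∀ (x : Fin n → Bool) (ω : Ω), 0 < w ω →
      out ω (C x (q1 ω)) (C x (q2 ω (C x (q1 ω)))) = some (x i))
    (hR : ∀ y : Fin m → Bool,
      0 < ∑ ω ∈ Finset.univ.filter
        (fun ω => q1 ω ∈ S ∧ q2 ω (y (q1 ω)) ∈ S), w ω) :
    ∀ (s : Fin m → Bool) (b : Bool), ∃ z : Fin m → Bool,
      (∀ t : Fin m, t ∉ S → z t = s t) ∧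
      (∑ ω ∈ Finset.univ.filter (fun ω =>
          (q1 ω ∈ S ∧ q2 ω (z (q1 ω)) ∈ S) ∧
          out ω (z (q1 ω)) (z (q2 ω (z (q1 ω)))) = some (!b)), w ω) /
        (∑ ω ∈ Finset.univ.filter
          (fun ω => q1 ω ∈ S ∧ q2 ω (z (q1 ω)) ∈ S), w ω) = 1 :=
  stmt_7_general C i S w hw q1 q2 out hpc hR
end

section
/- Let C : {0,1}^n → {0,1}^m be a binary code admitting a non-adaptive 2-query relaxed decoder Dec with perfect completeness and relaxed-decoding parameter (δ, 1/2 + ε): for every i, every x, and every y with Hamming distance HAM(y, C(x)) ≤ δm, Pr[Dec(i,y) ∈ {x_i, ⊥}] ≥ 1/2 + ε. Fix i ∈ [n] and let S_i = { j ∈ [m] : C_j is fixable by x_i }. Assume: (a) |S_i| ≤ δm/2; (b) whenever any decoding function used on a query pair {j,k} can output ⊥, both j, k ∈ S_i; (c) whenever j ∈ S_i, k ∉ S_i and the decoding function never outputs ⊥, the output does not depend on the answer to query k (or C_j ∈ {x_i, ¬x_i}). Then there is a 2-query decoder D_i (sampling Dec's query distribution conditioned on both queries avoiding S_i) such that for every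 x and every y with HAM(C(x), y) ≤ δm/2, Pr[D_i(y) = x_i] ≥ 1/2 + ε. -/
/-!
Flip the `i`-th bit of `x` to get `x'`, and overwrite `y` on `S` by `C x'`; since `|S| ≤ δm/2`
the new word `y'` is still within `δm` of `C x`. By perfect completeness and the structure of
the decoding functions on pairs meeting `S`, every query pair meeting `S` makes `Dec` output
`¬x_i` on `y'`. Hence all the mass `≥ 1/2 + ε` on which `Dec(i, y')` outputs `x_i` or `⊥` lies
on pairs avoiding `S`, where `y'` agrees with `y` and `⊥` is impossible; so the event `E_i`
alone carries mass `≥ 1/2 + ε` of successes on `y`, and conditioning on it only increases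
the ratio.
-/

open Finset

theorem exists_and_eq_of_not_exists_const {α : Type*} {P : α → Prop} {g : α → Bool}
    (h : ¬∃ c, ∀ x, P x → g x = c) (a : Bool) : ∃ z, P z ∧ g z = a := by
  by_contra hne
  push Not at hne
  exact h ⟨!a, fun x hx => by cases a <;> simpa using hne x hx⟩

theorem hammingDist_piecewise_le_card {ι : Type*} {β : ι → Type*} [Fintype ι] [DecidableEq ι]
    [∀ j, DecidableEq (β j)] (s : Finset ι) (u v : ∀ j, β j) :
    hammingDist (s.piecewise u v) v ≤ #s := by
  refine card_le_card fun j hj => ?_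
  by_contra hjs
  simp [piecewise_eq_of_notMem _ _ _ hjs] at hj

theorem hammingDist_piecewise_le_card_add {ι : Type*} {β : ι → Type*} [Fintype ι]
    [DecidableEq ι] [∀ j, DecidableEq (β j)] (s : Finset ι) (u v z : ∀ j, β j) :
    hammingDist (s.piecewise u v) z ≤ #s + hammingDist z v := by
  rw [hammingDist_comm z]
  exact (hammingDist_triangle _ v z).trans
    (Nat.add_le_add_right (hammingDist_piecewise_le_card s u v) _)

theorem Finset.sum_filter_le_sum_filter_of_pos_imp {ι M : Type*} [AddCommMonoid M]
    [PartialOrder M] [IsOrderedAddMonoid M] {s : Finset ι} {w : ι → M} (hw : ∀ a, 0 ≤ w a)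
    {P Q : ι → Prop} [DecidablePred P] [DecidablePred Q] (h : ∀ a, 0 < w a → P a → Q a) :
    ∑ a ∈ s with P a, w a ≤ ∑ a ∈ s with Q a, w a := by
  rw [sum_filter, sum_filter]
  refine sum_le_sum fun a _ => ?_
  by_cases hP : P a
  · rcases (hw a).lt_or_eq with hpos | hzero
    · simp [hP, h a hpos hP]
    · simp [← hzero]
  · rw [if_neg hP]
    split_ifs
    exacts [hw a, le_rfl]

section TwoQueryDecoder

variable {n m : ℕ} (C : (Fin n → Bool) → Fin m → Bool) (i : Fin n)

/- Either `g` ignores the answer at `k`, or `C_j` depends on `x_i` alone and any answer at the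
non-fixable `k` is realised by a message with the same `i`-th bit as `x`. -/
theorem decode_eq_of_not_fixable (g : Bool → Bool → Option Bool) {j k : Fin m}
    (hg : ∀ x, g (C x j) (C x k) = some (x i))
    (hk : ∀ b, ¬∃ c, ∀ x : Fin n → Bool, x i = b → C x k = c)
    (hj : (∀ a a' a'', g a a' = g a a'') ∨ (∀ x, C x j = x i) ∨ (∀ x, C x j = !(x i)))
    (x : Fin n → Bool) (b : Bool) : g (C x j) b = some (x i) := by
  rcases hj with hind | hdep
  · rw [hind _ b (C x k), hg]
  · obtain ⟨z, hzi, hzk⟩ := exists_and_eq_of_not_exists_const (hk (x i)) b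
    have hzj : C z j = C x j := by rcases hdep with h | h <;> simp [h, hzi]
    rw [← hzj, ← hzk, hg, hzi]

theorem decode_piecewise_eq_of_mem (S : Finset (Fin m))
    (hS : ∀ j : Fin m, j ∈ S ↔
      ((∃ c : Bool, ∀ x : Fin n → Bool, x i = false → C x j = c) ∨
       (∃ c : Bool, ∀ x : Fin n → Bool, x i = true → C x j = c)))
    (g : Bool → Bool → Option Bool) {j k : Fin m}
    (hg : ∀ x, g (C x j) (C x k) = some (x i))
    (hb : (∃ a a' : Bool, g a a' = none) → j ∈ S ∧ k ∈ S)
    (hc : (∀ a a' : Bool, g a a' ≠ none) →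
      (j ∈ S → k ∉ S →
        ((∀ a a' a'' : Bool, g a a' = g a a'') ∨
         (∀ x : Fin n → Bool, C x j = x i) ∨ (∀ x : Fin n → Bool, C x j = !(x i)))) ∧
      (k ∈ S → j ∉ S →
        ((∀ a a' a'' : Bool, g a a'' = g a' a'') ∨
         (∀ x : Fin n → Bool, C x k = x i) ∨ (∀ x : Fin n → Bool, C x k = !(x i)))))
    (hjk : j ∈ S ∨ k ∈ S) (x : Fin n → Bool) (y : Fin m → Bool) :
    g (S.piecewise (C x) y j) (S.piecewise (C x) y k) = some (x i) := by
  have not_fixable :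
      ∀ l ∉ S, ∀ b, ¬∃ c, ∀ x : Fin n → Bool, x i = b → C x l = c := by
    intro l hl b
    rw [hS, not_or] at hl
    cases b
    exacts [hl.1, hl.2]
  by_cases hj : j ∈ S <;> by_cases hk : k ∈ S
  · rw [piecewise_eq_of_mem _ _ _ hj, piecewise_eq_of_mem _ _ _ hk, hg]
  · have hnone : ∀ a a', g a a' ≠ none := fun a a' h => hk (hb ⟨a, a', h⟩).2
    rw [piecewise_eq_of_mem _ _ _ hj, piecewise_eq_of_notMem _ _ _ hk]
    exact decode_eq_of_not_fixable C i g hg (not_fixable k hk) ((hc hnone).1 hj hk) x (y k)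
  · have hnone : ∀ a a', g a a' ≠ none := fun a a' h => hj (hb ⟨a, a', h⟩).1
    rw [piecewise_eq_of_notMem _ _ _ hj, piecewise_eq_of_mem _ _ _ hk]
    have hc' := ((hc hnone).2 hk hj).imp_left fun h a a' a'' => h a' a'' a
    exact decode_eq_of_not_fixable C i (Function.swap g) hg (not_fixable j hj) hc' x (y j)
  · exact absurd hjk (by tauto)

end TwoQueryDecoder

theorem stmt_8_general {n m : ℕ} (C : (Fin n → Bool) → Fin m → Bool) (i : Fin n)
    (δ ε : ℝ) (hε : 0 < ε)
    {Ω : Type*} [Fintype Ω]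
    (w : Ω → ℝ) (hw : ∀ ω, 0 ≤ w ω) (hw1 : ∑ ω, w ω = 1)
    (qj qk : Ω → Fin m) (f : Ω → Bool → Bool → Option Bool)
    -- perfect completeness for coordinate i
    (hpc : ∀ (x : Fin n → Bool) (ω : Ω), 0 < w ω →
      f ω (C x (qj ω)) (C x (qk ω)) = some (x i))
    -- relaxed decoding with parameter (δ, 1/2 + ε)
    (hrel : ∀ (x : Fin n → Bool) (y : Fin m → Bool),
      (hammingDist y (C x) : ℝ) ≤ δ * m →
      1 / 2 + ε ≤ ∑ ω ∈ Finset.univ.filter (fun ω =>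
        f ω (y (qj ω)) (y (qk ω)) = some (x i) ∨
        f ω (y (qj ω)) (y (qk ω)) = none), w ω)
    -- S is the set of coordinates fixable by x_i
    (S : Finset (Fin m))
    (hS : ∀ j : Fin m, j ∈ S ↔
      ((∃ c : Bool, ∀ x : Fin n → Bool, x i = false → C x j = c) ∨
       (∃ c : Bool, ∀ x : Fin n → Bool, x i = true → C x j = c)))
    -- (a)
    (ha : (S.card : ℝ) ≤ δ * m / 2)
    -- (b)
    (hb : ∀ ω : Ω, 0 < w ω → (∃ a a' : Bool, f ω a a' = none) →
      qj ω ∈ S ∧ qk ω ∈ S)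
    -- (c)
    (hc : ∀ ω : Ω, 0 < w ω → (∀ a a' : Bool, f ω a a' ≠ none) →
      (qj ω ∈ S → qk ω ∉ S →
        ((∀ a a' a'' : Bool, f ω a a' = f ω a a'') ∨
         (∀ x : Fin n → Bool, C x (qj ω) = x i) ∨
         (∀ x : Fin n → Bool, C x (qj ω) = !(x i)))) ∧
      (qk ω ∈ S → qj ω ∉ S →
        ((∀ a a' a'' : Bool, f ω a a'' = f ω a' a'') ∨
         (∀ x : Fin n → Bool, C x (qk ω) = x i) ∨
         (∀ x : Fin n → Bool, C x (qk ω) = !(x i))))) :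
    -- conclusion: the conditioned decoder D_i is a (2, δ/2, 1/2+ε)-local
    -- decoder for coordinate i
    ∀ (x : Fin n → Bool) (y : Fin m → Bool),
      (hammingDist (C x) y : ℝ) ≤ δ * m / 2 →
      0 < (∑ ω ∈ Finset.univ.filter (fun ω => qj ω ∉ S ∧ qk ω ∉ S), w ω) ∧
      1 / 2 + ε ≤
        (∑ ω ∈ Finset.univ.filter (fun ω =>
            (qj ω ∉ S ∧ qk ω ∉ S) ∧
            f ω (y (qj ω)) (y (qk ω)) = some (x i)), w ω) /
        (∑ ω ∈ Finset.univ.filter (fun ω => qj ω ∉ S ∧ qk ω ∉ S), w ω) := by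
  intro x y hy
  set x' := Function.update x i (!x i)
  set y' := S.piecewise (C x') y
  have hforced : ∀ ω, 0 < w ω → (qj ω ∈ S ∨ qk ω ∈ S) →
      f ω (y' (qj ω)) (y' (qk ω)) = some (!x i) := fun ω hω hjk => by
    simpa [x'] using decode_piecewise_eq_of_mem C i S hS (f ω) (hpc · ω hω) (hb ω hω)
      (hc ω hω) hjk x' y
  have hclose : (hammingDist y' (C x) : ℝ) ≤ δ * m := by
    have : (hammingDist y' (C x) : ℝ) ≤ #S + hammingDist (C x) y := by
      exact_mod_cast hammingDist_piecewise_le_card_add S (C x') y (C x)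
    linarith
  have haccept : ∀ ω, 0 < w ω →
      (f ω (y' (qj ω)) (y' (qk ω)) = some (x i) ∨ f ω (y' (qj ω)) (y' (qk ω)) = none) →
      (qj ω ∉ S ∧ qk ω ∉ S) ∧ f ω (y (qj ω)) (y (qk ω)) = some (x i) := by
    intro ω hω hacc
    have hE : qj ω ∉ S ∧ qk ω ∉ S := by
      by_contra hE
      rw [hforced ω hω (by tauto)] at hacc
      simp at hacc
    rw [show y' (qj ω) = y (qj ω) from piecewise_eq_of_notMem _ _ _ hE.1,
      show y' (qk ω) = y (qk ω) from piecewise_eq_of_notMem _ _ _ hE.2] at hacc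
    exact ⟨hE, hacc.resolve_right fun h => hE.1 (hb ω hω ⟨_, _, h⟩).1⟩
  have hsucc := (hrel x y' hclose).trans (sum_filter_le_sum_filter_of_pos_imp hw haccept)
  have hsucc_le := sum_filter_le_sum_filter_of_pos_imp (s := univ) hw
    (P := fun ω => (qj ω ∉ S ∧ qk ω ∉ S) ∧ f ω (y (qj ω)) (y (qk ω)) = some (x i))
    (fun _ _ h => h.1)
  have hE_le : ∑ ω with qj ω ∉ S ∧ qk ω ∉ S, w ω ≤ 1 :=
    hw1 ▸ sum_le_univ_sum_of_nonneg hw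
  have hE_pos : 0 < ∑ ω with qj ω ∉ S ∧ qk ω ∉ S, w ω := by linarith
  exact ⟨hE_pos, hsucc.trans (le_div_self (by linarith) hE_pos hE_le)⟩

/-- Converting a non-adaptive 2-query relaxed decoder with perfect
completeness into a standard local decoder for coordinate `i`.  The decoder is
modelled by a finite probability space `(Ω, w)`, queries `qj ω, qk ω`, and a
decoding function `f ω : {0,1}² → {0,1,⊥}` (`none` plays `⊥`).  `S` is the set
of coordinates fixable by `x_i`.  Under hypotheses (a) `|S| ≤ δm/2`,
(b) any decoding function that can output `⊥` is only used on pairs inside `S`,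
(c) for mixed pairs, the `⊥`-free decoding function ignores the answer outside
`S` (or `C_j ∈ {x_i, ¬x_i}`), the decoder `D_i` that samples `Dec(i,·)`'s
queries conditioned on avoiding `S` succeeds: the conditioning event has
positive probability and for every `y` within distance `δm/2` of `C(x)`, the
conditional probability of outputting `x_i` is at least `1/2 + ε`. -/
theorem stmt_8 {n m : ℕ} (C : (Fin n → Bool) → Fin m → Bool) (i : Fin n)
    (δ ε : ℝ) (hδ : 0 < δ) (hε : 0 < ε)
    {Ω : Type*} [Fintype Ω] [DecidableEq Ω]
    (w : Ω → ℝ) (hw : ∀ ω, 0 ≤ w ω) (hw1 : ∑ ω, w ω = 1)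
    (qj qk : Ω → Fin m) (f : Ω → Bool → Bool → Option Bool)
    -- perfect completeness for coordinate i
    (hpc : ∀ (x : Fin n → Bool) (ω : Ω), 0 < w ω →
      f ω (C x (qj ω)) (C x (qk ω)) = some (x i))
    -- relaxed decoding with parameter (δ, 1/2 + ε)
    (hrel : ∀ (x : Fin n → Bool) (y : Fin m → Bool),
      (hammingDist y (C x) : ℝ) ≤ δ * m →
      1 / 2 + ε ≤ ∑ ω ∈ Finset.univ.filter (fun ω =>
        f ω (y (qj ω)) (y (qk ω)) = some (x i) ∨
        f ω (y (qj ω)) (y (qk ω)) = none), w ω)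
    -- S is the set of coordinates fixable by x_i
    (S : Finset (Fin m))
    (hS : ∀ j : Fin m, j ∈ S ↔
      ((∃ c : Bool, ∀ x : Fin n → Bool, x i = false → C x j = c) ∨
       (∃ c : Bool, ∀ x : Fin n → Bool, x i = true → C x j = c)))
    -- (a)
    (ha : (S.card : ℝ) ≤ δ * m / 2)
    -- (b)
    (hb : ∀ ω : Ω, 0 < w ω → (∃ a a' : Bool, f ω a a' = none) →
      qj ω ∈ S ∧ qk ω ∈ S)
    -- (c)
    (hc : ∀ ω : Ω, 0 < w ω → (∀ a a' : Bool, f ω a a' ≠ none) →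
      (qj ω ∈ S → qk ω ∉ S →
        ((∀ a a' a'' : Bool, f ω a a' = f ω a a'') ∨
         (∀ x : Fin n → Bool, C x (qj ω) = x i) ∨
         (∀ x : Fin n → Bool, C x (qj ω) = !(x i)))) ∧
      (qk ω ∈ S → qj ω ∉ S →
        ((∀ a a' a'' : Bool, f ω a a'' = f ω a' a'') ∨
         (∀ x : Fin n → Bool, C x (qk ω) = x i) ∨
         (∀ x : Fin n → Bool, C x (qk ω) = !(x i))))) :
    -- conclusion: the conditioned decoder D_i is a (2, δ/2, 1/2+ε)-local
    -- decoder for coordinate i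
    ∀ (x : Fin n → Bool) (y : Fin m → Bool),
      (hammingDist (C x) y : ℝ) ≤ δ * m / 2 →
      0 < (∑ ω ∈ Finset.univ.filter (fun ω => qj ω ∉ S ∧ qk ω ∉ S), w ω) ∧
      1 / 2 + ε ≤
        (∑ ω ∈ Finset.univ.filter (fun ω =>
            (qj ω ∉ S ∧ qk ω ∉ S) ∧
            f ω (y (qj ω)) (y (qk ω)) = some (x i)), w ω) /
        (∑ ω ∈ Finset.univ.filter (fun ω => qj ω ∉ S ∧ qk ω ∉ S), w ω) :=
  stmt_8_general C i δ ε hε w hw hw1 qj qk f hpc hrel S hS ha hb hc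
end

section
/- Let C : {0,1}^n → {0,1}^m be a code, J ⊆ [n], and ρ ∈ {0,1}^{[n]\J}. Define the restricted code C_{J|ρ} on message space {0,1}^J by keeping only those coordinate functions C_j|_{x_{[n]\J}=ρ} that are not constant. Then: (1) C_{J|ρ} maps {0,1}^{|J|} to {0,1}^{m'} with m' ≤ m; (2) if C admits a q-query relaxed decoder with perfect completeness and relaxed decoding parameter (δ, α) with absolute error budget δm, then C_{J|ρ} admits a q-query relaxed decoder with perfect completeness and absolute error budget δm (hence relative error parameter at least δ·m/m' ≥ δ): any decoder for C can be simulated for C_{J|ρ} by answering queries to eliminated (constant) coordinates with their constant values. -/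
/-- Running a `q`-query adaptive decoder: `qu` maps the history of answers to
the next query, `y` is the received word; the result is the list of answers. -/
def runDec {κ : Type*} (qu : List Bool → κ) (y : κ → Bool) : ℕ → List Bool
  | 0 => []
  | q + 1 => (runDec qu y q) ++ [y (qu (runDec qu y q))]

/-- A `q`-query relaxed decoder with perfect completeness, absolute error
budget `budget`, and success parameter `α`, for the code `C` with message
index type `ι` and codeword index type `κ`.  `none` plays the role of `⊥`. -/
structure RelaxedDecoder {ι κ : Type*} [Fintype ι] [Fintype κ] [DecidableEq κ]
    (C : (ι → Bool) → κ → Bool) (q : ℕ) (budget α : ℝ) where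
  Ω : Type
  fin : Fintype Ω
  w : Ω → ℝ
  w_nonneg : ∀ ω, 0 ≤ w ω
  w_sum : ∑ ω, w ω = 1
  qu : Ω → ι → List Bool → κ
  out : Ω → ι → List Bool → Option Bool
  complete : ∀ (i : ι) (x : ι → Bool) (ω : Ω), 0 < w ω →
    out ω i (runDec (qu ω i) (C x) q) = some (x i)
  relaxed : ∀ (i : ι) (x : ι → Bool) (y : κ → Bool),
    (hammingDist y (C x) : ℝ) ≤ budget →
    α ≤ ∑ ω, (if out ω i (runDec (qu ω i) y q) = some (x i) ∨
                 out ω i (runDec (qu ω i) y q) = none then w ω else 0)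

attribute [instance] RelaxedDecoder.fin

/-! The decoder for the restricted code runs the decoder for `C`; a query to an eliminated
coordinate is answered by its constant value (the query itself is spent on an arbitrary kept
coordinate and its answer discarded). It therefore decodes the received word with the constants
reinserted, which is no farther from the corresponding codeword of `C`. If no coordinate is kept,
`C` is injective by perfect completeness, and this forces `J = ∅`. -/

namespace RelaxedDecoder

variable {ι κ : Type*} [Fintype ι] [Fintype κ] [DecidableEq κ]
  {C : (ι → Bool) → κ → Bool} {q : ℕ} {budget α : ℝ}

theorem exists_w_pos (D : RelaxedDecoder C q budget α) : ∃ ω, 0 < D.w ω := by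
  by_contra! h
  have hsum : ∑ ω, D.w ω = 0 :=
    Finset.sum_eq_zero fun ω _ => le_antisymm (h ω) (D.w_nonneg ω)
  simp [D.w_sum] at hsum

theorem injective (D : RelaxedDecoder C q budget α) : Function.Injective C := by
  intro x x' hxx'
  obtain ⟨ω, hω⟩ := D.exists_w_pos
  funext i
  have h := D.complete i x ω hω
  rw [hxx', D.complete i x' ω hω] at h
  exact Option.some_injective _ h.symm

def ofIsEmpty [IsEmpty ι] (C : (ι → Bool) → κ → Bool) (q : ℕ) (budget α : ℝ) :
    RelaxedDecoder C q budget α where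
  Ω := Unit
  fin := inferInstance
  w _ := 1
  w_nonneg _ := zero_le_one
  w_sum := by simp
  qu _ i := isEmptyElim i
  out _ i := isEmptyElim i
  complete i := isEmptyElim i
  relaxed i := isEmptyElim i

end RelaxedDecoder

section Simulation

-- `kc j = some c`: coordinate `j` is eliminated, with constant value `c`.
variable {κ κ' : Type*} (kc : κ → Option Bool) (g : κ → κ')

def liftWord (y : κ' → Bool) (j : κ) : Bool := (kc j).getD (y (g j))

/-- The answer history of the simulated decoder, rebuilt from the answers actually received by
overwriting the answers to dummy queries with the known constants. -/
def replay (f : List Bool → κ) (l : List Bool) : List Bool :=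
  l.foldl (fun h a => h ++ [(kc (f h)).getD a]) []

def simQuery (f : List Bool → κ) (l : List Bool) : κ' := g (f (replay kc f l))

theorem replay_concat (f : List Bool → κ) (l : List Bool) (a : Bool) :
    replay kc f (l ++ [a]) = replay kc f l ++ [(kc (f (replay kc f l))).getD a] :=
  List.foldl_concat ..

theorem replay_runDec_simQuery (f : List Bool → κ) (y : κ' → Bool) (t : ℕ) :
    replay kc f (runDec (simQuery kc g f) y t) = runDec f (liftWord kc g y) t := by
  induction t with
  | zero => rfl
  | succ t ih => rw [runDec, replay_concat, simQuery, ih, runDec, liftWord]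

theorem hammingDist_liftWord_le [Fintype κ] [Fintype κ'] (hg : Set.InjOn g {j | kc j = none})
    (y z : κ' → Bool) : hammingDist (liftWord kc g y) (liftWord kc g z) ≤ hammingDist y z := by
  have hne : ∀ j, liftWord kc g y j ≠ liftWord kc g z j → kc j = none ∧ y (g j) ≠ z (g j) := by
    intro j hj
    rcases hkc : kc j with _ | c <;> simp_all [liftWord]
  refine Finset.card_le_card_of_injOn g (fun j hj => ?_) (fun j₁ hj₁ j₂ hj₂ => ?_)
  · simpa using (hne j (by simpa using hj)).2
  · exact hg (hne j₁ (by simpa using hj₁)).1 (hne j₂ (by simpa using hj₂)).1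

end Simulation

namespace RelaxedDecoder

variable {ι κ ι' κ' : Type*} [Fintype ι] [Fintype κ] [DecidableEq κ] [Fintype ι'] [Fintype κ']
  [DecidableEq κ'] {C : (ι → Bool) → κ → Bool} {q : ℕ} {budget α : ℝ}

def ofSimulation (D : RelaxedDecoder C q budget α) (C' : (ι' → Bool) → κ' → Bool)
    (σ : ι' → ι) (e : (ι' → Bool) → ι → Bool) (he : ∀ u i, e u (σ i) = u i)
    (kc : κ → Option Bool) (g : κ → κ') (hg : Set.InjOn g {j | kc j = none})
    (hC : ∀ u, liftWord kc g (C' u) = C (e u)) : RelaxedDecoder C' q budget α where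
  Ω := D.Ω
  fin := D.fin
  w := D.w
  w_nonneg := D.w_nonneg
  w_sum := D.w_sum
  qu ω i := simQuery kc g (D.qu ω (σ i))
  out ω i l := D.out ω (σ i) (replay kc (D.qu ω (σ i)) l)
  complete i u ω hω := by
    rw [replay_runDec_simQuery, hC, D.complete _ _ ω hω, he]
  relaxed i u y hy := by
    have hdist : (hammingDist (liftWord kc g y) (C (e u)) : ℝ) ≤ budget := by
      rw [← hC]
      exact le_trans (by exact_mod_cast hammingDist_liftWord_le kc g hg y (C' u)) hy
    simpa only [replay_runDec_simQuery, he] using D.relaxed (σ i) (e u) _ hdist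

end RelaxedDecoder

theorem isEmpty_of_subsingleton_fun_bool {ι : Type*} (h : Subsingleton (ι → Bool)) : IsEmpty ι :=
  ⟨fun i => Bool.false_ne_true (congrFun (h.elim (fun _ => false) (fun _ => true)) i)⟩

/-- Restricting a code.  Fix the message bits outside `J` to `ρ`,
and keep only the codeword coordinates whose restricted coordinate functions
are non-constant (the set `Kept`).  Then (1) the restricted code has length
`m' = |Kept| ≤ m`, and (2) if `C` admits a `q`-query relaxed decoder with
perfect completeness and absolute error budget `δm`, so does the restricted
code (same budget `δm`, hence relative error parameter at least `δ`). -/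
theorem stmt_9 {n m : ℕ} (C : (Fin n → Bool) → Fin m → Bool)
    (J : Finset (Fin n)) (ρ : Fin n → Bool)
    (ext : (↥J → Bool) → Fin n → Bool)
    (hext : ∀ (u : ↥J → Bool) (t : Fin n),
      (∀ h : t ∈ J, ext u t = u ⟨t, h⟩) ∧ (t ∉ J → ext u t = ρ t))
    (Kept : Finset (Fin m))
    (hKept : ∀ j : Fin m, j ∈ Kept ↔
      ¬ ∃ c : Bool, ∀ u : ↥J → Bool, C (ext u) j = c)
    (q : ℕ) (δ α : ℝ)
    (D : RelaxedDecoder C q (δ * m) α) :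
    Fintype.card ↥Kept ≤ m ∧
    Nonempty (RelaxedDecoder
      (fun (u : ↥J → Bool) (j : ↥Kept) => C (ext u) j.1) q (δ * m) α) := by
  refine ⟨by simpa using Kept.card_le_univ, ?_⟩
  have hext_val (u : ↥J → Bool) (i : ↥J) : ext u i = u i := (hext u i).1 i.2
  have hconst (j : Fin m) (hj : j ∉ Kept) (u : ↥J → Bool) :
      C (ext u) j = C (ext default) j := by
    obtain ⟨c, hc⟩ := not_not.mp (mt (hKept j).mpr hj)
    rw [hc, hc]
  rcases isEmpty_or_nonempty ↥Kept with hK | ⟨⟨k₀⟩⟩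
  · have hnot (j : Fin m) : j ∉ Kept := fun hj => hK.false ⟨j, hj⟩
    have : IsEmpty ↥J := isEmpty_of_subsingleton_fun_bool ⟨fun u v => by
      have hCuv : C (ext u) = C (ext v) := funext fun j => by
        rw [hconst j (hnot j) u, hconst j (hnot j) v]
      funext i
      rw [← hext_val u, ← hext_val v, D.injective hCuv]⟩
    exact ⟨.ofIsEmpty _ q _ α⟩
  · refine ⟨D.ofSimulation _ Subtype.val ext hext_val
      (fun j => if j ∈ Kept then none else some (C (ext default) j))
      (fun j => if h : j ∈ Kept then ⟨j, h⟩ else k₀) ?_ ?_⟩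
    · intro j₁ hj₁ j₂ hj₂ h
      have hj₁ : j₁ ∈ Kept := by simpa using hj₁
      have hj₂ : j₂ ∈ Kept := by simpa using hj₂
      simpa [hj₁, hj₂] using h
    · intro u
      funext j
      by_cases hj : j ∈ Kept
      · simp [liftWord, hj]
      · simp [liftWord, hj, hconst j hj u]
end

section
/- Let Dec be an adaptive 2-query decoder for a code C : {0,1}^n → {0,1}^m with perfect completeness for coordinate i: for every message x, running Dec(i,·) with oracle C(x) outputs x_i with probability 1. Let j ∈ [m] be a possible first query (j in the support of the first-query distribution D_i), and suppose C_j is not fixable by x_i (neither restriction C_j|_{x_i=0} nor C_j|_{x_i=1} is constant). Then for every answer b ∈ {0,1} to the first query, every second query k in the support of D_{i;j,b}, and every answer b' ∈ {0,1}, the decoder's output random variable X_{i;j,b,k,b'} satisfies Pr[X_{i;j,b,k,b'} = ⊥] = 0. -/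
/-!
For each bit `v`, non-fixability gives a message `x_v` with `x_v i = v` whose first answer is `b`.
By perfect completeness, after the second answer `C x_v k` the output is `some v` almost surely.
An output distribution cannot be concentrated on both `some false` and `some true`, so the two
second answers differ and therefore exhaust `Bool`: every answer `b'` leads to an output
distribution without mass on `⊥`.
-/

lemma exists_pos_of_sum_eq_one {ι : Type*} [Fintype ι] {p : ι → ℝ} (h : ∑ i, p i = 1) :
    ∃ i, 0 < p i := by
  obtain ⟨i, -, hi⟩ := Finset.exists_lt_of_sum_lt (f := 0) (g := p) (s := Finset.univ)
    (by simp [h])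
  exact ⟨i, hi⟩

lemma Bool.exists_eq_of_not_const_on {α : Type*} {p : α → Prop} {f : α → Bool}
    (h : ¬ ∃ c, ∀ x, p x → f x = c) (b : Bool) : ∃ x, p x ∧ f x = b := by
  push Not at h
  obtain ⟨x, hx, hfx⟩ := h (!b)
  exact ⟨x, hx, by simpa using hfx⟩

lemma apply_none_eq_zero_of_forall_concentrated (Y : Bool → Option Bool → ℝ)
    (hY : ∀ a o, 0 ≤ Y a o) (hYsum : ∀ a, ∑ o, Y a o = 1) (a : Bool → Bool)
    (ha : ∀ v o, 0 < Y (a v) o → o = some v) (b' : Bool) : Y b' none = 0 := by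
  have ha_inj : Function.Injective a := Bool.injective_iff.2 fun h => by
    obtain ⟨o, ho⟩ := exists_pos_of_sum_eq_one (hYsum (a false))
    have h₀ := ha false o ho
    have h₁ := ha true o (h ▸ ho)
    simp [h₀] at h₁
  obtain ⟨v, rfl⟩ := Finite.surjective_of_injective ha_inj b'
  exact le_antisymm (not_lt.1 fun h => by simpa using ha v none h) (hY _ _)

theorem stmt_10_general {n m : ℕ} (C : (Fin n → Bool) → Fin m → Bool) (i : Fin n)
    (D1 : Fin m → ℝ) (D2 : Fin m → Bool → Fin m → ℝ)
    (X : Fin m → Bool → Fin m → Bool → Option Bool → ℝ)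
    (hX : ∀ j b k b' o, 0 ≤ X j b k b' o)
    (hXsum : ∀ j b k b', ∑ o : Option Bool, X j b k b' o = 1)
    -- perfect completeness for coordinate i
    (hpc : ∀ (x : Fin n → Bool) (j : Fin m), 0 < D1 j →
      ∀ k : Fin m, 0 < D2 j (C x j) k →
      ∀ o : Option Bool, 0 < X j (C x j) k (C x k) o → o = some (x i))
    (j₀ : Fin m) (hj₀ : 0 < D1 j₀)
    -- C_{j₀} is not fixable by x_i
    (hnf : ¬ ((∃ c : Bool, ∀ x : Fin n → Bool, x i = false → C x j₀ = c) ∨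
              (∃ c : Bool, ∀ x : Fin n → Bool, x i = true → C x j₀ = c))) :
    ∀ (b : Bool) (k : Fin m), 0 < D2 j₀ b k →
      ∀ b' : Bool, X j₀ b k b' none = 0 := by
  intro b k hk b'
  have h_fibre : ∀ v, ∃ x : Fin n → Bool, x i = v ∧ C x j₀ = b := by
    rintro (_ | _)
    · exact Bool.exists_eq_of_not_const_on (not_or.1 hnf).1 b
    · exact Bool.exists_eq_of_not_const_on (not_or.1 hnf).2 b
  choose x hxi hxj using h_fibre
  refine apply_none_eq_zero_of_forall_concentrated (X j₀ b k) (hX j₀ b k) (hXsum j₀ b k)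
    (fun v => C (x v) k) (fun v o ho => ?_) b'
  have h := hpc (x v) j₀ hj₀ k (by rwa [hxj v]) o (by rwa [hxj v])
  rwa [hxi v] at h

/-- Adaptive 2-query decoder model: first query `j ~ D1`,
answer `b`, second query `k ~ D2 j b`, answer `b'`, output distributed as
`X j b k b'` over `{0,1,⊥}` (`none` plays `⊥`).  Perfect completeness for
coordinate `i`: running the decoder with oracle `C(x)` outputs `x_i` with
probability 1.  If `j₀` is in the support of `D1` and `C_{j₀}` is not fixable
by `x_i`, then for every answer `b`, every `k` in the support of `D2 j₀ b`,
and every answer `b'`, the output is never `⊥`: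
`Pr[X_{i;j₀,b,k,b'} = ⊥] = 0`. -/
theorem stmt_10 {n m : ℕ} (C : (Fin n → Bool) → Fin m → Bool) (i : Fin n)
    (D1 : Fin m → ℝ) (D2 : Fin m → Bool → Fin m → ℝ)
    (X : Fin m → Bool → Fin m → Bool → Option Bool → ℝ)
    (hD1 : ∀ j, 0 ≤ D1 j) (hD2 : ∀ j b k, 0 ≤ D2 j b k)
    (hX : ∀ j b k b' o, 0 ≤ X j b k b' o)
    (hXsum : ∀ j b k b', ∑ o : Option Bool, X j b k b' o = 1)
    -- perfect completeness for coordinate i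
    (hpc : ∀ (x : Fin n → Bool) (j : Fin m), 0 < D1 j →
      ∀ k : Fin m, 0 < D2 j (C x j) k →
      ∀ o : Option Bool, 0 < X j (C x j) k (C x k) o → o = some (x i))
    (j₀ : Fin m) (hj₀ : 0 < D1 j₀)
    -- C_{j₀} is not fixable by x_i
    (hnf : ¬ ((∃ c : Bool, ∀ x : Fin n → Bool, x i = false → C x j₀ = c) ∨
              (∃ c : Bool, ∀ x : Fin n → Bool, x i = true → C x j₀ = c))) :
    ∀ (b : Bool) (k : Fin m), 0 < D2 j₀ b k →
      ∀ b' : Bool, X j₀ b k b' none = 0 :=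
  stmt_10_general C i D1 D2 X hX hXsum hpc j₀ hj₀ hnf
end

section
/- Let Dec be an adaptive 2-query decoder for C : {0,1}^n → {0,1}^m with perfect completeness for coordinate i, and suppose the restriction C_j|_{x_i=0} is the constant-zero function for some first query j in the support of D_i. Suppose there is a second query k in the support of D_{i;j,0} such that C_k|_{x_i=0} is not constant. Then: (1) Pr[X_{i;j,0,k,0} = 0] = Pr[X_{i;j,0,k,1} = 0] = 1 (the output equals 0 regardless of the second answer), and (2) C_j|_{x_i=1} is the constant-one function, i.e., C_j(x) = x_i for all x. -/
theorem Fintype.apply_eq_one_of_pos_imp_eq {α : Type*} [Fintype α] {p : α → ℝ}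
    (hp : ∀ a, 0 ≤ p a) (hsum : ∑ a, p a = 1) {a : α} (hsupp : ∀ b, 0 < p b → b = a) :
    p a = 1 := by
  rw [← hsum, Fintype.sum_eq_single a]
  intro b hb
  exact (hp b).eq_or_lt.resolve_right (mt (hsupp b) hb) |>.symm

theorem Bool.exists_apply_eq_of_not_exists_const {α : Type*} {P : α → Prop} {f : α → Bool}
    (h : ¬ ∃ c, ∀ x, P x → f x = c) (b : Bool) : ∃ x, P x ∧ f x = b := by
  by_contra hb
  push Not at hb
  exact h ⟨!b, fun x hx => by cases b <;> simpa using hb x hx⟩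

section Decoder

variable {n m : ℕ} {C : (Fin n → Bool) → Fin m → Bool} {i : Fin n}
  {D1 : Fin m → ℝ} {D2 : Fin m → Bool → Fin m → ℝ}
  {X : Fin m → Bool → Fin m → Bool → Option Bool → ℝ}

theorem output_eq_one_of_perfect_completeness
    (hX : ∀ j b k b' o, 0 ≤ X j b k b' o)
    (hXsum : ∀ j b k b', ∑ o : Option Bool, X j b k b' o = 1)
    (hpc : ∀ (x : Fin n → Bool) (j : Fin m), 0 < D1 j →
      ∀ k : Fin m, 0 < D2 j (C x j) k →
      ∀ o : Option Bool, 0 < X j (C x j) k (C x k) o → o = some (x i))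
    (x : Fin n → Bool) {j : Fin m} (hj : 0 < D1 j) {k : Fin m} (hk : 0 < D2 j (C x j) k) :
    X j (C x j) k (C x k) (some (x i)) = 1 :=
  Fintype.apply_eq_one_of_pos_imp_eq (hX _ _ _ _) (hXsum _ _ _ _) (hpc x j hj k hk)

end Decoder

theorem stmt_11_general {n m : ℕ} (C : (Fin n → Bool) → Fin m → Bool) (i : Fin n)
    (D1 : Fin m → ℝ) (D2 : Fin m → Bool → Fin m → ℝ)
    (X : Fin m → Bool → Fin m → Bool → Option Bool → ℝ)
    (hX : ∀ j b k b' o, 0 ≤ X j b k b' o)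
    (hXsum : ∀ j b k b', ∑ o : Option Bool, X j b k b' o = 1)
    -- perfect completeness for coordinate i
    (hpc : ∀ (x : Fin n → Bool) (j : Fin m), 0 < D1 j →
      ∀ k : Fin m, 0 < D2 j (C x j) k →
      ∀ o : Option Bool, 0 < X j (C x j) k (C x k) o → o = some (x i))
    (j₀ : Fin m) (hj₀ : 0 < D1 j₀)
    -- C_{j₀} restricted to x_i = 0 is the constant-zero function
    (hj₀0 : ∀ x : Fin n → Bool, x i = false → C x j₀ = false)
    (k : Fin m) (hk : 0 < D2 j₀ false k)
    -- C_k restricted to x_i = 0 is not constant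
    (hknc : ¬ ∃ c : Bool, ∀ x : Fin n → Bool, x i = false → C x k = c) :
    (X j₀ false k false (some false) = 1 ∧ X j₀ false k true (some false) = 1)
    ∧ (∀ x : Fin n → Bool, C x j₀ = x i) := by
  have output_zero : ∀ b', X j₀ false k b' (some false) = 1 := by
    intro b'
    obtain ⟨x, hxi, rfl⟩ := Bool.exists_apply_eq_of_not_exists_const hknc b'
    have hxj₀ := hj₀0 x hxi
    simpa [hxi, hxj₀] using
      output_eq_one_of_perfect_completeness hX hXsum hpc x hj₀ (k := k) (by rwa [hxj₀])
  refine ⟨⟨output_zero false, output_zero true⟩, fun x => ?_⟩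
  cases hxi : x i with
  | false => exact hj₀0 x hxi
  | true =>
    by_contra hxj₀
    rw [Bool.not_eq_true] at hxj₀
    -- by (1) the decoder would output `0` on `x` with positive probability, although `x i = 1`
    have := hpc x j₀ hj₀ k (by rwa [hxj₀]) (some false)
      (by rw [hxj₀, output_zero]; exact one_pos)
    simp [hxi] at this

/-- Adaptive 2-query decoder model as in Claim 3.8: first query
`j ~ D1`, answer `b`, second query `k ~ D2 j b`, answer `b'`, output
distributed as `X j b k b'` over `{0,1,⊥}` (`none` plays `⊥`).  Assume perfect
completeness for coordinate `i`.  Suppose `j₀` is in the support of `D1`,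
`C_{j₀}|_{x_i=0} ≡ 0`, and some `k` in the support of `D2 j₀ 0` has
`C_k|_{x_i=0}` non-constant.  Then (1) the output after first answer `0` and
second query `k` equals `0` with probability 1, regardless of the second
answer; and (2) `C_{j₀}|_{x_i=1} ≡ 1`, i.e. `C_{j₀}(x) = x_i` for all `x`. -/
theorem stmt_11 {n m : ℕ} (C : (Fin n → Bool) → Fin m → Bool) (i : Fin n)
    (D1 : Fin m → ℝ) (D2 : Fin m → Bool → Fin m → ℝ)
    (X : Fin m → Bool → Fin m → Bool → Option Bool → ℝ)
    (hD1 : ∀ j, 0 ≤ D1 j) (hD2 : ∀ j b k, 0 ≤ D2 j b k)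
    (hX : ∀ j b k b' o, 0 ≤ X j b k b' o)
    (hXsum : ∀ j b k b', ∑ o : Option Bool, X j b k b' o = 1)
    -- perfect completeness for coordinate i
    (hpc : ∀ (x : Fin n → Bool) (j : Fin m), 0 < D1 j →
      ∀ k : Fin m, 0 < D2 j (C x j) k →
      ∀ o : Option Bool, 0 < X j (C x j) k (C x k) o → o = some (x i))
    (j₀ : Fin m) (hj₀ : 0 < D1 j₀)
    -- C_{j₀} restricted to x_i = 0 is the constant-zero function
    (hj₀0 : ∀ x : Fin n → Bool, x i = false → C x j₀ = false)
    (k : Fin m) (hk : 0 < D2 j₀ false k)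
    -- C_k restricted to x_i = 0 is not constant
    (hknc : ¬ ∃ c : Bool, ∀ x : Fin n → Bool, x i = false → C x k = c) :
    (X j₀ false k false (some false) = 1 ∧ X j₀ false k true (some false) = 1)
    ∧ (∀ x : Fin n → Bool, C x j₀ = x i) :=
  stmt_11_general C i D1 D2 X hX hXsum hpc j₀ hj₀ hj₀0 k hk hknc
end

section
/- Let C : {0,1}^n → {0,1}^m be a code with a randomized 2-query non-adaptive decoder Dec having perfect completeness, and fix i ∈ [n]. Let S_i be the set of codeword coordinates fixable by x_i. Suppose that every possible query pair {j,k} of Dec(i,·) intersects S_i (no pair avoids S_i entirely), and suppose the structural properties hold: (b) any decoding function that can output ⊥ is only used on pairs fully inside S_i, and (c) for pairs {j,k} with j ∈ S_i, k ∉ S_i, the (⊥-free) decoding function's output does not depend on the answer at k. Then for any x ∈ {0,1}^n there exists z ∈ {0,1}^m with HAM(C(x), z) ≤ |S_i| such that Pr[Dec(i,z) ∈ {x_i, ⊥}] = 0. -/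
/-!
Flip the `i`-th bit of `x` to get `y`, and let `z` agree with `C y` on `S` and with `C x` off `S`,
so `z` differs from `C x` only inside `S`. Every query pair of positive weight meets `S`: if it lies
inside `S`, the decoder sees exactly `C y`; if it is mixed, it is `⊥`-free by (b), hence by (c)
ignores the answer outside `S`, and again answers as on `C y`. Perfect completeness then makes
every such run output `y i = !x i`, never `x i` or `⊥`.
-/

theorem hammingDist_piecewise_le {ι : Type*} [Fintype ι] [DecidableEq ι] {β : ι → Type*}
    [∀ j, DecidableEq (β j)] (s : Finset ι) (u v : ∀ j, β j) :
    hammingDist u (s.piecewise v u) ≤ s.card := by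
  refine Finset.card_le_card fun j hj => ?_
  by_contra hjs
  simp [hjs] at hj

theorem apply_piecewise_eq_of_ignores_outside {α β γ : Type*} (g : β → β → γ) (s : Finset α)
    [DecidablePred (· ∈ s)] (u v : α → β) {j k : α} (hjk : j ∈ s ∨ k ∈ s)
    (h₁ : j ∈ s → k ∉ s → ∀ a b b', g a b = g a b')
    (h₂ : k ∈ s → j ∉ s → ∀ a a' b, g a b = g a' b) :
    g (s.piecewise v u j) (s.piecewise v u k) = g (v j) (v k) := by
  by_cases hj : j ∈ s <;> by_cases hk : k ∈ s
  · rw [Finset.piecewise_eq_of_mem _ _ _ hj, Finset.piecewise_eq_of_mem _ _ _ hk]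
  · rw [Finset.piecewise_eq_of_mem _ _ _ hj, Finset.piecewise_eq_of_notMem _ _ _ hk]
    exact h₁ hj hk _ _ _
  · rw [Finset.piecewise_eq_of_notMem _ _ _ hj, Finset.piecewise_eq_of_mem _ _ _ hk]
    exact h₂ hk hj _ _ _
  · exact (hjk.elim hj hk).elim

theorem stmt_15_general {n m : ℕ} (C : (Fin n → Bool) → Fin m → Bool) (i : Fin n)
    {Ω : Type*} [Fintype Ω]
    (w : Ω → ℝ) (hw : ∀ ω, 0 ≤ w ω)
    (qj qk : Ω → Fin m) (f : Ω → Bool → Bool → Option Bool)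
    -- perfect completeness for coordinate i
    (hpc : ∀ (x : Fin n → Bool) (ω : Ω), 0 < w ω →
      f ω (C x (qj ω)) (C x (qk ω)) = some (x i))
    -- S is the set of coordinates fixable by x_i
    (S : Finset (Fin m))
    -- every possible query pair intersects S
    (hint : ∀ ω : Ω, 0 < w ω → qj ω ∈ S ∨ qk ω ∈ S)
    -- (b)
    (hb : ∀ ω : Ω, 0 < w ω → (∃ a a' : Bool, f ω a a' = none) →
      qj ω ∈ S ∧ qk ω ∈ S)
    -- (c)
    (hc : ∀ ω : Ω, 0 < w ω → (∀ a a' : Bool, f ω a a' ≠ none) →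
      (qj ω ∈ S → qk ω ∉ S → ∀ a a' a'' : Bool, f ω a a' = f ω a a'') ∧
      (qk ω ∈ S → qj ω ∉ S → ∀ a a' a'' : Bool, f ω a a'' = f ω a' a'')) :
    ∀ x : Fin n → Bool, ∃ z : Fin m → Bool,
      hammingDist (C x) z ≤ S.card ∧
      (∑ ω ∈ Finset.univ.filter (fun ω =>
          f ω (z (qj ω)) (z (qk ω)) = some (x i) ∨
          f ω (z (qj ω)) (z (qk ω)) = none), w ω) = 0 := by
  intro x
  set y := Function.update x i (!x i)
  refine ⟨S.piecewise (C y) (C x), hammingDist_piecewise_le S _ _,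
    Finset.sum_eq_zero fun ω hω => le_antisymm (not_lt.1 fun hpos => ?_) (hw ω)⟩
  have hfree_of_mixed (hmixed : ¬(qj ω ∈ S ∧ qk ω ∈ S)) : ∀ a a', f ω a a' ≠ none :=
    fun a a' hnone => hmixed (hb ω hpos ⟨a, a', hnone⟩)
  have hout : f ω (S.piecewise (C y) (C x) (qj ω)) (S.piecewise (C y) (C x) (qk ω))
      = some (!x i) := by
    rw [apply_piecewise_eq_of_ignores_outside (f ω) S (C x) (C y) (hint ω hpos)
      (fun hj hk => (hc ω hpos (hfree_of_mixed fun h => hk h.2)).1 hj hk)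
      (fun hk hj => (hc ω hpos (hfree_of_mixed fun h => hj h.1)).2 hk hj), hpc y ω hpos]
    simp [y]
  simp [hout] at hω

/-- Let `Dec` be a non-adaptive randomized 2-query decoder for
coordinate `i` of `C` (probability space `(Ω, w)`, queries `qj ω, qk ω`,
decoding function `f ω : {0,1}² → {0,1,⊥}`, `none` playing `⊥`) with perfect
completeness.  Let `S` be the set of coordinates fixable by `x_i`.  Suppose
every possible query pair intersects `S`, and the structural properties hold:
(b) a decoding function that can output `⊥` is only used on pairs fully inside
`S`; (c) on a mixed pair the (`⊥`-free) decoding function does not depend on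
the answer outside `S`.  Then for every `x` there is `z` with
`HAM(C(x), z) ≤ |S|` such that `Pr[Dec(i,z) ∈ {x_i, ⊥}] = 0`. -/
theorem stmt_15 {n m : ℕ} (C : (Fin n → Bool) → Fin m → Bool) (i : Fin n)
    {Ω : Type*} [Fintype Ω] [DecidableEq Ω]
    (w : Ω → ℝ) (hw : ∀ ω, 0 ≤ w ω) (hw1 : ∑ ω, w ω = 1)
    (qj qk : Ω → Fin m) (f : Ω → Bool → Bool → Option Bool)
    -- perfect completeness for coordinate i
    (hpc : ∀ (x : Fin n → Bool) (ω : Ω), 0 < w ω →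
      f ω (C x (qj ω)) (C x (qk ω)) = some (x i))
    -- S is the set of coordinates fixable by x_i
    (S : Finset (Fin m))
    (hS : ∀ j : Fin m, j ∈ S ↔
      ((∃ c : Bool, ∀ x : Fin n → Bool, x i = false → C x j = c) ∨
       (∃ c : Bool, ∀ x : Fin n → Bool, x i = true → C x j = c)))
    -- every possible query pair intersects S
    (hint : ∀ ω : Ω, 0 < w ω → qj ω ∈ S ∨ qk ω ∈ S)
    -- (b)
    (hb : ∀ ω : Ω, 0 < w ω → (∃ a a' : Bool, f ω a a' = none) →
      qj ω ∈ S ∧ qk ω ∈ S)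
    -- (c)
    (hc : ∀ ω : Ω, 0 < w ω → (∀ a a' : Bool, f ω a a' ≠ none) →
      (qj ω ∈ S → qk ω ∉ S → ∀ a a' a'' : Bool, f ω a a' = f ω a a'') ∧
      (qk ω ∈ S → qj ω ∉ S → ∀ a a' a'' : Bool, f ω a a'' = f ω a' a'')) :
    ∀ x : Fin n → Bool, ∃ z : Fin m → Bool,
      hammingDist (C x) z ≤ S.card ∧
      (∑ ω ∈ Finset.univ.filter (fun ω =>
          f ω (z (qj ω)) (z (qk ω)) = some (x i) ∨
          f ω (z (qj ω)) (z (qk ω)) = none), w ω) = 0 :=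
  stmt_15_general C i w hw qj qk f hpc S hint hb hc
end
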